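/- arXiv:cs/0208028 — 8 statements merged into one kernel-verified Lean document; each statement's English description precedes it below -/
import Mathlib

section
/- For any local name assignment L, key k, time t, and principal expressions p1, p2, p3, the interpretation of p1's(p2's p3) equals the interpretation of (p1's p2)'s p3; that is, composition of principal expressions is associative under the interpretation function. -/
/-- Principal expressions over keys `K` and local names `N`. -/
inductive PExp (K N : Type*) where
  | key : K → PExp K N
  | name : N → PExp K N
  | comp : PExp K N → PExp K N → PExp K N

/-- The interpretation of a principal expression relative to a local name
assignment `L`, a key `k`, and a time `t`. -/
def interp {K N : Type*} (L : K → N → ℕ → Set K) : PExp K N → K → ℕ → Set K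
  | PExp.key k', _, _ => {k'}
  | PExp.name n, k, t => L k n t
  | PExp.comp p q, k, t => ⋃ k' ∈ interp L p k t, interp L q k' t

/-- Composition of principal expressions is associative under interpretation. -/
theorem interp_comp_assoc {K N : Type*} (L : K → N → ℕ → Set K)
    (k : K) (t : ℕ) (p1 p2 p3 : PExp K N) :
    interp L (PExp.comp p1 (PExp.comp p2 p3)) k t =
      interp L (PExp.comp (PExp.comp p1 p2) p3) k t := by
  ext x
  simp only [interp, Set.mem_iUnion]
  aesop
end

section
/- The set of permission/delegation assignments is closed under pointwise minimum: if {P_i}_{i ∈ I} is a nonempty family of permission/delegation assignments, then the function P_0 defined by P_0(k1,t,k2,a) = min_{i ∈ I} P_i(k1,t,k2,a) is again a permission/delegation assignment. -/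
/-- A permission/delegation assignment: a function `P : K × ℕ × K × Act → {0,1,2}`
(encoded as ℕ-valued with values ≤ 2) satisfying the delegation-transitivity
condition: if `P k1 t k2 a = 2` and `P k2 t k3 a = i` then `P k1 t k3 a ≥ i`. -/
def IsPDA {K Act : Type*} (P : K → ℕ → K → Act → ℕ) : Prop :=
  (∀ k1 t k2 a, P k1 t k2 a ≤ 2) ∧
  ∀ k1 k2 k3 t a, P k1 t k2 a = 2 → P k2 t k3 a ≤ P k1 t k3 a

/-- Permission/delegation assignments are closed under pointwise minimum of a
nonempty family. -/
theorem isPDA_iInf {K Act I : Type*} [Nonempty I]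
    (P : I → K → ℕ → K → Act → ℕ) (h : ∀ i, IsPDA (P i)) :
    IsPDA (fun k1 t k2 a => ⨅ i, P i k1 t k2 a) := by
  constructor
  · intro k1 t k2 a
    exact le_trans (ciInf_le (OrderBot.bddBelow _) (Classical.arbitrary I))
      ((h _).1 k1 t k2 a)
  · intro k1 k2 k3 t a h2
    refine le_ciInf fun i => ?_
    have hall : P i k1 t k2 a = 2 := by
      have hle : (2 : ℕ) ≤ P i k1 t k2 a := h2 ▸ ciInf_le (OrderBot.bddBelow _) i
      exact le_antisymm ((h i).1 k1 t k2 a) hle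
    exact le_trans (ciInf_le (OrderBot.bddBelow _) i) ((h i).2 k1 k2 k3 t a hall)
end

section
/- For every run r, there exists a unique interpretation π_r that is minimal (with respect to the componentwise order on interpretations) among all interpretations consistent with r. Concretely: (i) the maximal interpretation is consistent with r, so the set of consistent interpretations is nonempty; (ii) the pointwise intersection/minimum π_0 of all consistent interpretations is itself consistent with r; and (iii) π_0 ≤ π for every consistent π. -/
/-- Naming certificates `(cert k n p V ⟨R⟩)` and authorization certificates
`(cert k p D A V ⟨R⟩)` (the action expression is recorded by its denotation,
a set of actions). -/
inductive Cert (K N Act : Type*) where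
  | naming : K → N → PExp K N → Set ℕ → Option K → Cert K N Act
  | auth : K → PExp K N → Bool → Set Act → Set ℕ → Option K → Cert K N Act

/-- Consistency of an interpretation `(L, P)` with a run `r`, relative to an
abstract applicability predicate `app`. -/
def Consistent {K N Act : Type*} (app : Cert K N Act → ℕ → Prop)
    (r : ℕ → Set (Cert K N Act))
    (L : K → N → ℕ → Set K) (P : K → ℕ → K → Act → ℕ) : Prop :=
  ∀ t t' : ℕ, t' ≤ t → ∀ c ∈ r t',
    (∀ k n p V R, c = Cert.naming k n p V R → t ∈ V → app c t →
      interp L p k t ⊆ L k n t) ∧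
    (∀ k p D A V R, c = Cert.auth k p D A V R → t ∈ V → app c t →
      ∀ a ∈ A, ∀ k' ∈ interp L p k t,
        1 ≤ P k t k' a ∧ (D = true → P k t k' a = 2))

/-- Monotonicity of `interp` in the local name assignment. -/
lemma interp_mono {K N : Type*} {L L' : K → N → ℕ → Set K}
    (h : ∀ k n t, L k n t ⊆ L' k n t) :
    ∀ p k t, interp L p k t ⊆ interp L' p k t := by
  intro p
  induction p with
  | key k' => intro k t x hx; exact hx
  | name n => intro k t x hx; exact h k n t hx
  | comp p q ihp ihq =>
      intro k t x hx
      simp only [interp, Set.mem_iUnion] at hx ⊢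
      obtain ⟨k', hk', hx⟩ := hx
      exact ⟨k', ihp k t hk', ihq k' t hx⟩

/-- For every run there is a unique interpretation that is minimal (in the
componentwise order) among all interpretations consistent with the run. -/
theorem exists_unique_minimal_consistent {K N Act : Type*}
    (app : Cert K N Act → ℕ → Prop) (r : ℕ → Set (Cert K N Act)) :
    ∃! π : (K → N → ℕ → Set K) × (K → ℕ → K → Act → ℕ),
      IsPDA π.2 ∧ Consistent app r π.1 π.2 ∧
      ∀ π' : (K → N → ℕ → Set K) × (K → ℕ → K → Act → ℕ),
        IsPDA π'.2 → Consistent app r π'.1 π'.2 →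
        (∀ k n t, π.1 k n t ⊆ π'.1 k n t) ∧
        (∀ k t k' a, π.2 k t k' a ≤ π'.2 k t k' a) := by
  classical
  set Good : Set ((K → N → ℕ → Set K) × (K → ℕ → K → Act → ℕ)) :=
    {π | IsPDA π.2 ∧ Consistent app r π.1 π.2} with hGood
  -- the maximal interpretation is consistent
  have hmax : ((fun _ _ _ => (Set.univ : Set K)), (fun _ _ _ _ => (2 : ℕ))) ∈ Good := by
    refine ⟨⟨fun _ _ _ _ => le_refl 2, fun _ _ _ _ _ _ => le_refl 2⟩, ?_⟩
    intro t t' _ c _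
    constructor
    · intro k n p V R _ _ _ x _; exact Set.mem_univ x
    · intro k p D A V R _ _ _ a _ k' _
      exact ⟨by norm_num, fun _ => rfl⟩
  have hne : Good.Nonempty := ⟨_, hmax⟩
  -- the pointwise minimum
  set L0 : K → N → ℕ → Set K := fun k n t => ⋂ π ∈ Good, π.1 k n t with hL0
  set P0 : K → ℕ → K → Act → ℕ :=
    fun k t k' a => sInf ((fun π => π.2 k t k' a) '' Good) with hP0
  have hL0le : ∀ π ∈ Good, ∀ k n t, L0 k n t ⊆ π.1 k n t := by
    intro π hπ k n t x hx
    simp only [hL0, Set.mem_iInter] at hx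
    exact hx π hπ
  have hP0le : ∀ π ∈ Good, ∀ k t k' a, P0 k t k' a ≤ π.2 k t k' a := by
    intro π hπ k t k' a
    exact Nat.sInf_le ⟨π, hπ, rfl⟩
  have hP0ge : ∀ k t k' a m, (∀ π ∈ Good, m ≤ π.2 k t k' a) → m ≤ P0 k t k' a := by
    intro k t k' a m hm
    refine le_csInf ⟨(2:ℕ), ⟨_, hmax, rfl⟩⟩ ?_
    rintro b ⟨π, hπ, rfl⟩
    exact hm π hπ
  have hinterp : ∀ π ∈ Good, ∀ p k t, interp L0 p k t ⊆ interp π.1 p k t := by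
    intro π hπ
    exact interp_mono (fun k n t => hL0le π hπ k n t)
  -- π0 is a PDA
  have hPDA0 : IsPDA P0 := by
    constructor
    · intro k1 t k2 a
      exact hP0le _ hmax k1 t k2 a
    · intro k1 k2 k3 t a h2
      apply hP0ge
      intro π hπ
      have h2' : π.2 k1 t k2 a = 2 := by
        have := hP0le π hπ k1 t k2 a
        have := hπ.1.1 k1 t k2 a
        omega
      exact le_trans (hP0le π hπ k2 t k3 a) (hπ.1.2 k1 k2 k3 t a h2')
  -- π0 is consistent
  have hCons0 : Consistent app r L0 P0 := by
    intro t t' htt c hc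
    constructor
    · intro k n p V R hcert hV happ x hx
      simp only [hL0, Set.mem_iInter]
      intro π hπ
      exact (hπ.2 t t' htt c hc).1 k n p V R hcert hV happ
        (hinterp π hπ p k t hx)
    · intro k p D A V R hcert hV happ a ha k' hk'
      constructor
      · apply hP0ge
        intro π hπ
        exact ((hπ.2 t t' htt c hc).2 k p D A V R hcert hV happ a ha k'
          (hinterp π hπ p k t hk')).1
      · intro hD
        have h2 : ∀ π ∈ Good, π.2 k t k' a = 2 := fun π hπ =>
          ((hπ.2 t t' htt c hc).2 k p D A V R hcert hV happ a ha k'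
            (hinterp π hπ p k t hk')).2 hD
        have hle : P0 k t k' a ≤ 2 := hP0le _ hmax k t k' a
        have hge := hP0ge k t k' a 2 (fun π hπ => (h2 π hπ).ge)
        omega
  refine ⟨(L0, P0), ⟨hPDA0, hCons0, ?_⟩, ?_⟩
  · intro π' hπ' hc'
    exact ⟨hL0le π' ⟨hπ', hc'⟩, hP0le π' ⟨hπ', hc'⟩⟩
  · rintro ⟨L', P'⟩ ⟨hPDA', hCons', hmin'⟩
    have h1 := hmin' (L0, P0) hPDA0 hCons0
    have h2L := hL0le (L', P') ⟨hPDA', hCons'⟩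
    have h2P := hP0le (L', P') ⟨hPDA', hCons'⟩
    refine Prod.ext ?_ ?_
    · funext k n t
      exact Set.Subset.antisymm (h1.1 k n t) (h2L k n t)
    · funext k t k' a
      exact le_antisymm (h1.2 k t k' a) (h2P k t k' a)
end

section
/- Rule R1 (5-tuple reduction) is sound for the closed semantics: if c1, c2, c3 are authorization certificates with associated 5-tuples ⟨k1, k2, true, A1, V1⟩, ⟨k2, p, D2, A2, V2⟩, and ⟨k1, p, D2, A1 ∩ A2, V1 ∩ V2⟩ respectively, then for every run r, every interpretation π consistent with r, every key k and time t: if r,π,k,t ⊨ φ_{c1} and r,π,k,t ⊨ φ_{c2}, then r,π,k,t ⊨ φ_{c3}. -/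
/-- Fully-qualified principal expressions. -/
inductive FQ {K N : Type*} : PExp K N → Prop where
  | key (k : K) : FQ (PExp.key k)
  | ext {p : PExp K N} (n : N) : FQ p → FQ (PExp.comp p (PExp.name n))

/-- `Perm L P t k1 p A`: `k1` permits every key in `[[p]]` to perform every
action in `A` at time `t`. -/
def Perm {K N Act : Type*} (L : K → N → ℕ → Set K) (P : K → ℕ → K → Act → ℕ)
    (t : ℕ) (k1 : K) (p : PExp K N) (A : Set Act) : Prop :=
  ∀ k2 ∈ interp L p k1 t, ∀ a ∈ A, 1 ≤ P k1 t k2 a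

/-- `Del L P t k1 p A`: `k1` permits every key in `[[p]]` to delegate
authority over every action in `A` at time `t`. -/
def Del {K N Act : Type*} (L : K → N → ℕ → Set K) (P : K → ℕ → K → Act → ℕ)
    (t : ℕ) (k1 : K) (p : PExp K N) (A : Set Act) : Prop :=
  ∀ k2 ∈ interp L p k1 t, ∀ a ∈ A, P k1 t k2 a = 2

theorem interp_FQ {K N : Type*} (L : K → N → ℕ → Set K) {p : PExp K N}
    (hp : FQ p) (k k' : K) (t : ℕ) : interp L p k t = interp L p k' t := by
  induction hp with
  | key _ => rfl
  | ext n _ ih => simp only [interp, ih]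

/-- Soundness of rule R1 (5-tuple reduction) for the closed semantics: for
every run, every interpretation consistent with it, and every time `t`, if
the formulas associated with the 5-tuples `⟨k1, k2, true, A1, V1⟩` and
`⟨k2, p, D2, A2, V2⟩` hold at `t`, then so does the formula associated with
`⟨k1, p, D2, A1 ∩ A2, V1 ∩ V2⟩`. -/
theorem r1_sound {K N Act : Type*}
    (app : Cert K N Act → ℕ → Prop) (r : ℕ → Set (Cert K N Act))
    (L : K → N → ℕ → Set K) (P : K → ℕ → K → Act → ℕ)
    (hP : IsPDA P) (hcons : Consistent app r L P)
    (k1 k2 : K) (p : PExp K N) (hp : FQ p) (D2 : Bool)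
    (A1 A2 : Set Act) (V1 V2 : Set ℕ) (t : ℕ)
    (h1 : t ∈ V1 → Perm L P t k1 (PExp.key k2) A1 ∧ Del L P t k1 (PExp.key k2) A1)
    (h2 : t ∈ V2 → Perm L P t k2 p A2 ∧ (D2 = true → Del L P t k2 p A2)) :
    t ∈ V1 ∩ V2 →
      Perm L P t k1 p (A1 ∩ A2) ∧ (D2 = true → Del L P t k1 p (A1 ∩ A2)) := by
  rintro ⟨ht1, ht2⟩
  obtain ⟨_, hdel1⟩ := h1 ht1
  obtain ⟨hperm2, hdel2⟩ := h2 ht2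
  have h12 : ∀ a ∈ A1, P k1 t k2 a = 2 := fun a ha =>
    hdel1 k2 (by simp [interp]) a ha
  constructor
  · intro k' hk' a ⟨ha1, ha2⟩
    have := hP.2 k1 k2 k' t a (h12 a ha1)
    exact le_trans (hperm2 k' (interp_FQ L hp k1 k2 t ▸ hk') a ha2) this
  · intro hD k' hk' a ⟨ha1, ha2⟩
    have h2' := hdel2 hD k' (interp_FQ L hp k1 k2 t ▸ hk') a ha2
    have := hP.2 k1 k2 k' t a (h12 a ha1)
    have hb := hP.1 k1 t k' a
    omega
end

section
/- Rule R2' (generalized 4-tuple reduction) is sound: for all keys k1, k2, local names n, m, fully-qualified principal expressions p (possibly empty tail) and q, intervals V1, V2, local name assignment L, key k, and time t: if (t ∈ V1 → [[k1's n]]_{L,k,t} ⊇ [[k2's m's p]]_{L,k,t}) and (t ∈ V2 → [[k2's m]]_{L,k,t} ⊇ [[q]]_{L,k,t}), then t ∈ V1 ∩ V2 → [[k1's n]]_{L,k,t} ⊇ [[q's p]]_{L,k,t}. -/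
/-- Extend a principal expression by a (possibly empty) string of local names
on the right; `PExp.ext r []` is `r` (the empty-tail convention). -/
def PExp.ext {K N : Type*} (p : PExp K N) (l : List N) : PExp K N :=
  l.foldl (fun e n => PExp.comp e (PExp.name n)) p

theorem ext_mono {K N : Type*} (L : K → N → ℕ → Set K) (t : ℕ) (l : List N) :
    ∀ (e1 e2 : PExp K N) (k : K), interp L e1 k t ⊆ interp L e2 k t →
      interp L (PExp.ext e1 l) k t ⊆ interp L (PExp.ext e2 l) k t := by
  induction l with
  | nil => intro e1 e2 k h; exact h
  | cons a l ih =>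
    intro e1 e2 k h
    apply ih
    intro x hx
    simp only [interp, Set.mem_iUnion] at hx ⊢
    obtain ⟨k', hk', hx⟩ := hx
    exact ⟨k', h hk', hx⟩

/-- Soundness of rule R2' (generalized 4-tuple reduction): if `k1's n`
contains `k2's m's p` during `V1` and `k2's m` contains `q` during `V2`, then
`k1's n` contains `q's p` during `V1 ∩ V2`. Here `p` is a (possibly empty)
tail of local names and `q` is fully qualified. -/
theorem r2'_sound {K N : Type*} (L : K → N → ℕ → Set K) (k : K) (t : ℕ)
    (k1 k2 : K) (n m : N) (p : List N) (q : PExp K N) (hq : FQ q)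
    (V1 V2 : Set ℕ)
    (h1 : t ∈ V1 →
      interp L (PExp.ext (PExp.comp (PExp.key k2) (PExp.name m)) p) k t ⊆
        interp L (PExp.comp (PExp.key k1) (PExp.name n)) k t)
    (h2 : t ∈ V2 →
      interp L q k t ⊆ interp L (PExp.comp (PExp.key k2) (PExp.name m)) k t) :
    t ∈ V1 ∩ V2 →
      interp L (PExp.ext q p) k t ⊆
        interp L (PExp.comp (PExp.key k1) (PExp.name n)) k t := by
  rintro ⟨hv1, hv2⟩
  exact (ext_mono L t p q _ k (h2 hv2)).trans (h1 hv1)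
end

section
/- (Proposition: 3-tuple composition, part (a)) Let T be a set of 4- and 5-tuples and let ⟶* denote derivability using the 3-tuple rules R5, R6' and the other reduction rules. If T ⟶* ⟨p, q, V1⟩ (a 3-tuple asserting p is bound to q during V1) and T ⟶* ⟨k, n, p, V2⟩ (a 4-tuple), then T ⟶* ⟨k, n, q, V1 ∩ V2⟩. The proof goes by induction on the length of the derivation of ⟨p, q, V1⟩. -/
/-- Tuples: 3-tuples `⟨p, q, V⟩`, 4-tuples `⟨k, n, p, V⟩`, and 5-tuples
`⟨k, p, D, A, V⟩` (action expressions recorded by their denotations). -/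
inductive Tup (K N Act : Type*) where
  | t3 : PExp K N → PExp K N → Set ℕ → Tup K N Act
  | t4 : K → N → PExp K N → Set ℕ → Tup K N Act
  | t5 : K → PExp K N → Bool → Set Act → Set ℕ → Tup K N Act

/-- The binary reduction rules R1, R2', R3', R4(a)-(c), R6'. -/
inductive StepP {K N Act : Type*} : Tup K N Act → Tup K N Act → Tup K N Act → Prop where
  | r1 {k1 k2 : K} {p : PExp K N} {D2 : Bool} {A1 A2 : Set Act} {V1 V2 : Set ℕ} :
      StepP (Tup.t5 k1 (PExp.key k2) true A1 V1) (Tup.t5 k2 p D2 A2 V2)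
        (Tup.t5 k1 p D2 (A1 ∩ A2) (V1 ∩ V2))
  | r2' {k1 k2 : K} {n m : N} {p : List N} {q : PExp K N} {V1 V2 : Set ℕ} :
      StepP (Tup.t4 k1 n (PExp.ext (PExp.comp (PExp.key k2) (PExp.name m)) p) V1)
        (Tup.t4 k2 m q V2) (Tup.t4 k1 n (PExp.ext q p) (V1 ∩ V2))
  | r3' {k1 k2 : K} {n : N} {p : List N} {q : PExp K N} {D : Bool} {A : Set Act}
      {V1 V2 : Set ℕ} :
      StepP (Tup.t5 k1 (PExp.ext (PExp.comp (PExp.key k2) (PExp.name n)) p) D A V1)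
        (Tup.t4 k2 n q V2) (Tup.t5 k1 (PExp.ext q p) D A (V1 ∩ V2))
  | r4a {k : K} {n : N} {p : PExp K N} {V1 V2 V3 : Set ℕ} :
      V3 ⊆ V1 ∪ V2 → StepP (Tup.t4 k n p V1) (Tup.t4 k n p V2) (Tup.t4 k n p V3)
  | r4b {k : K} {p : PExp K N} {D : Bool} {A : Set Act} {V1 V2 V3 : Set ℕ} :
      V3 ⊆ V1 ∪ V2 →
      StepP (Tup.t5 k p D A V1) (Tup.t5 k p D A V2) (Tup.t5 k p D A V3)
  | r4c {k : K} {p : PExp K N} {D1 D2 D3 : Bool} {A1 A2 A3 : Set Act} {V : Set ℕ} :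
      (D3 = true → D1 = true ∧ D2 = true) → A3 ⊆ A1 ∪ A2 →
      StepP (Tup.t5 k p D1 A1 V) (Tup.t5 k p D2 A2 V) (Tup.t5 k p D3 A3 V)
  | r6' {k1 : K} {n : N} {p r : PExp K N} {q : List N} {V1 V2 : Set ℕ} :
      StepP (Tup.t3 p (PExp.ext (PExp.comp (PExp.key k1) (PExp.name n)) q) V1)
        (Tup.t4 k1 n r V2) (Tup.t3 p (PExp.ext r q) (V1 ∩ V2))

/-- The axiom tuples: R0 instances `⟨k, n, k's n, [0,∞]⟩` and R5 instances
`⟨p, p, [0,∞]⟩` for fully-qualified `p`. -/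
def AxP (K N Act : Type*) : Set (Tup K N Act) :=
  {τ | ∃ (k : K) (n : N),
      τ = Tup.t4 k n (PExp.comp (PExp.key k) (PExp.name n)) Set.univ} ∪
  {τ | ∃ p : PExp K N, FQ p ∧ τ = Tup.t3 p p Set.univ}

/-- Derivability from a set of tuples using the axioms and binary rules. -/
inductive Deriv {K N Act : Type*} (Ax : Set (Tup K N Act))
    (St : Tup K N Act → Tup K N Act → Tup K N Act → Prop)
    (T : Set (Tup K N Act)) : Tup K N Act → Prop where
  | mem {τ} : τ ∈ T → Deriv Ax St T τ
  | ax {τ} : τ ∈ Ax → Deriv Ax St T τ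
  | step {τ₁ τ₂ τ₃} : Deriv Ax St T τ₁ → Deriv Ax St T τ₂ → St τ₁ τ₂ τ₃ →
      Deriv Ax St T τ₃

/-- 3-tuple composition with 4-tuples (part (a)): if `T` (a set of 4- and
5-tuples) derives the 3-tuple `⟨p, q, V1⟩` and the 4-tuple `⟨k, n, p, V2⟩`,
then it derives `⟨k, n, q, V1 ∩ V2⟩`. -/
theorem three_tuple_comp {K N Act : Type*} (T : Set (Tup K N Act))
    (hT : ∀ (p q : PExp K N) (V : Set ℕ), Tup.t3 p q V ∉ T)
    {p q : PExp K N} (hp : FQ p) (hq : FQ q) {k : K} {n : N} {V1 V2 : Set ℕ}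
    (h3 : Deriv (AxP K N Act) StepP T (Tup.t3 p q V1))
    (h4 : Deriv (AxP K N Act) StepP T (Tup.t4 k n p V2)) :
    Deriv (AxP K N Act) StepP T (Tup.t4 k n q (V1 ∩ V2)) := by
  have aux : ∀ τ, Deriv (AxP K N Act) StepP T τ → ∀ q' V1', τ = Tup.t3 p q' V1' →
      Deriv (AxP K N Act) StepP T (Tup.t4 k n q' (V1' ∩ V2)) := by
    intro τ hd
    induction hd with
    | mem h =>
      intro q' V1' heq; subst heq; exact absurd h (hT _ _ _)
    | ax h =>
      intro q' V1' heq; subst heq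
      rcases h with ⟨k', n', he⟩ | ⟨p', _, he⟩
      · cases he
      · injection he with h1 h2 h3'
        subst h1; subst h2; subst h3'
        rw [Set.univ_inter]; exact h4
    | step h1 h2 hst ih1 ih2 =>
      intro q' V1' heq; subst heq
      cases hst with
      | r6' =>
        rw [Set.inter_comm _ V2, ← Set.inter_assoc, Set.inter_comm V2 _]
        exact Deriv.step (ih1 _ _ rfl) h2 StepP.r2'
  exact aux _ h3 q V1 rfl
end

section
/- (Lemma 3red) Let C be a finite set of certificates, C_R a finite set of CRLs, and define the local name assignment L by: L(k,n,t) = { k' : Tuples(C,C_R) ⟶₀* ⟨k, n, k', V⟩ for some interval V with t ∈ V }. Then for every fully-qualified principal expression p, key k, and time t: k' ∈ [[p]]_{L,k,t} if and only if Tuples(C,C_R) ⟶₀* ⟨p, k', V⟩ (a 3-tuple) for some interval V containing t. -/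
/-- The binary reduction rules R1, R2, R3, R6 (the versions whose second
4-tuple has a bare key as subject). -/
inductive Step0 {K N Act : Type*} : Tup K N Act → Tup K N Act → Tup K N Act → Prop where
  | r1 {k1 k2 : K} {p : PExp K N} {D2 : Bool} {A1 A2 : Set Act} {V1 V2 : Set ℕ} :
      Step0 (Tup.t5 k1 (PExp.key k2) true A1 V1) (Tup.t5 k2 p D2 A2 V2)
        (Tup.t5 k1 p D2 (A1 ∩ A2) (V1 ∩ V2))
  | r2 {k1 k2 k3 : K} {n m : N} {p : List N} {V1 V2 : Set ℕ} :
      Step0 (Tup.t4 k1 n (PExp.ext (PExp.comp (PExp.key k2) (PExp.name m)) p) V1)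
        (Tup.t4 k2 m (PExp.key k3) V2)
        (Tup.t4 k1 n (PExp.ext (PExp.key k3) p) (V1 ∩ V2))
  | r3 {k1 k2 k3 : K} {n : N} {p : List N} {D : Bool} {A : Set Act} {V1 V2 : Set ℕ} :
      Step0 (Tup.t5 k1 (PExp.ext (PExp.comp (PExp.key k2) (PExp.name n)) p) D A V1)
        (Tup.t4 k2 n (PExp.key k3) V2)
        (Tup.t5 k1 (PExp.ext (PExp.key k3) p) D A (V1 ∩ V2))
  | r6 {k1 k2 : K} {n : N} {p : PExp K N} {q : List N} {V1 V2 : Set ℕ} :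
      Step0 (Tup.t3 p (PExp.ext (PExp.comp (PExp.key k1) (PExp.name n)) q) V1)
        (Tup.t4 k1 n (PExp.key k2) V2)
        (Tup.t3 p (PExp.ext (PExp.key k2) q) (V1 ∩ V2))

/-- The axiom tuples: R5 instances `⟨p, p, [0,∞]⟩` for fully-qualified `p`. -/
def Ax0 (K N Act : Type*) : Set (Tup K N Act) :=
  {τ | ∃ p : PExp K N, FQ p ∧ τ = Tup.t3 p p Set.univ}

/-- The validity interval of a certificate. -/
def Cert.cvalid {K N Act : Type*} : Cert K N Act → Set ℕ
  | Cert.naming _ _ _ V _ => V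
  | Cert.auth _ _ _ _ V _ => V

/-- The (optional) revoker of a certificate. -/
def Cert.crevoker {K N Act : Type*} : Cert K N Act → Option K
  | Cert.naming _ _ _ _ R => R
  | Cert.auth _ _ _ _ _ R => R

/-- The tuple of a certificate, with a given validity interval. -/
def Cert.toTup {K N Act : Type*} : Cert K N Act → Set ℕ → Tup K N Act
  | Cert.naming k n p _ _, V => Tup.t4 k n p V
  | Cert.auth k p D A _ _, V => Tup.t5 k p D A V

/-- A certificate revocation list. -/
structure CRL (K N Act : Type*) where
  issuer : K
  canceled : Set (Cert K N Act)
  valid : Set ℕ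

/-- `c` is live with respect to the CRL `cr`. -/
def live {K N Act : Type*} (c : Cert K N Act) (cr : CRL K N Act) : Prop :=
  c.crevoker = some cr.issuer ∧ (c.cvalid ∩ cr.valid).Nonempty ∧ c ∉ cr.canceled

/-- `Tuples(C, C_R)`: the tuples `τ(c, cr)` for live pairs, together with the
tuples of irrevocable certificates. -/
def Tuples {K N Act : Type*} (C : Set (Cert K N Act)) (CR : Set (CRL K N Act)) :
    Set (Tup K N Act) :=
  {τ | ∃ c ∈ C, ∃ cr ∈ CR, live c cr ∧ τ = c.toTup (c.cvalid ∩ cr.valid)} ∪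
  {τ | ∃ c ∈ C, c.crevoker = none ∧ τ = c.toTup c.cvalid}

section Aux

variable {K N Act : Type*}

lemma mem_tuples_ne_t3 {C : Set (Cert K N Act)} {CR : Set (CRL K N Act)}
    {τ : Tup K N Act} (h : τ ∈ Tuples C CR) (p q : PExp K N) (V : Set ℕ) :
    τ ≠ Tup.t3 p q V := by
  rcases h with ⟨c, _, cr, _, _, rfl⟩ | ⟨c, _, _, rfl⟩ <;> cases c <;>
    simp [Cert.toTup]

lemma PExp.ext_append (p : PExp K N) (a b : List N) :
    PExp.ext (PExp.ext p a) b = PExp.ext p (a ++ b) :=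
  (List.foldl_append ..).symm

lemma FQ.ext_list {p : PExp K N} (h : FQ p) (l : List N) : FQ (PExp.ext p l) := by
  induction l generalizing p with
  | nil => exact h
  | cons n l ih => exact ih (FQ.ext n h)

/-- Suffix-extension property for derivable 3-tuples. -/
lemma deriv_t3_ext {C : Set (Cert K N Act)} {CR : Set (CRL K N Act)}
    {τ : Tup K N Act}
    (h : Deriv (Ax0 K N Act) Step0 (Tuples C CR) τ) :
    ∀ p q V, τ = Tup.t3 p q V → ∀ l : List N,
      Deriv (Ax0 K N Act) Step0 (Tuples C CR)
        (Tup.t3 (PExp.ext p l) (PExp.ext q l) V) := by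
  induction h with
  | mem hm =>
      intro p q V hτ l
      exact absurd hτ (mem_tuples_ne_t3 hm p q V)
  | ax ha =>
      intro p q V hτ l
      rcases ha with ⟨r, hr, rfl⟩
      cases hτ
      exact Deriv.ax ⟨PExp.ext p l, hr.ext_list l, rfl⟩
  | step h1 h2 hst ih1 ih2 =>
      intro p q V hτ l
      cases hst with
      | r6 =>
          rename_i k1 k2 n P qq V1 V2
          cases hτ
          have h1' := ih1 _ _ _ rfl l
          rw [PExp.ext_append] at h1'
          have := Deriv.step h1' h2
            (Step0.r6 (k1 := k1) (k2 := k2) (n := n) (q := qq ++ l))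
          rwa [← PExp.ext_append] at this
      | r1 => exact absurd hτ (by simp)
      | r2 => exact absurd hτ (by simp)
      | r3 => exact absurd hτ (by simp)

lemma interp_ext_mono {L : K → N → ℕ → Set K} {t : ℕ} {r1 r2 : PExp K N}
    (h : ∀ k, interp L r1 k t ⊆ interp L r2 k t) (l : List N) :
    ∀ k, interp L (PExp.ext r1 l) k t ⊆ interp L (PExp.ext r2 l) k t := by
  induction l generalizing r1 r2 with
  | nil => exact h
  | cons n l ih =>
      refine ih (fun k => ?_)
      intro x hx
      simp only [interp, Set.mem_iUnion] at hx ⊢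
      obtain ⟨k', hk', hx⟩ := hx
      exact ⟨k', h k hk', hx⟩

/-- Soundness of derivable 3-tuples w.r.t. the interpretation. -/
lemma deriv_t3_sound {C : Set (Cert K N Act)} {CR : Set (CRL K N Act)}
    {L : K → N → ℕ → Set K}
    (hL : ∀ k n t, L k n t =
      {k' | ∃ V : Set ℕ,
        Deriv (Ax0 K N Act) Step0 (Tuples C CR) (Tup.t4 k n (PExp.key k') V) ∧
        t ∈ V})
    {τ : Tup K N Act}
    (h : Deriv (Ax0 K N Act) Step0 (Tuples C CR) τ) :
    ∀ p q V, τ = Tup.t3 p q V → ∀ t ∈ V, ∀ k,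
      interp L q k t ⊆ interp L p k t := by
  induction h with
  | mem hm =>
      intro p q V hτ
      exact absurd hτ (mem_tuples_ne_t3 hm p q V)
  | ax ha =>
      intro p q V hτ
      rcases ha with ⟨r, hr, rfl⟩
      cases hτ
      intro t _ k
      exact subset_rfl
  | step h1 h2 hst ih1 ih2 =>
      intro p q V hτ
      cases hst with
      | r6 =>
          rename_i k1 k2 n P qq V1 V2
          cases hτ
          intro t ht k
          have ht1 : t ∈ V1 := ht.1
          have ht2 : t ∈ V2 := ht.2
          refine subset_trans ?_ (ih1 _ _ _ rfl t ht1 k)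
          refine interp_ext_mono (fun k0 => ?_) qq k
          intro x hx
          simp only [interp, Set.mem_singleton_iff] at hx
          subst hx
          simp only [interp, Set.mem_iUnion, Set.mem_singleton_iff]
          exact ⟨k1, rfl, by rw [hL]; exact ⟨V2, h2, ht2⟩⟩
      | r1 => exact absurd hτ (by simp)
      | r2 => exact absurd hτ (by simp)
      | r3 => exact absurd hτ (by simp)

end Aux

/-- Lemma 3red: with `L k n t = { k' : Tuples(C,C_R) ⟶₀* ⟨k,n,k',V⟩ for some
V ∋ t }`, a key `k'` is in `[[p]]_{L,k,t}` for fully-qualified `p` iff the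
3-tuple `⟨p, k', V⟩` is derivable for some interval `V` containing `t`. -/
theorem lemma_3red {K N Act : Type*}
    (C : Set (Cert K N Act)) (CR : Set (CRL K N Act))
    (hC : C.Finite) (hCR : CR.Finite)
    (L : K → N → ℕ → Set K)
    (hL : ∀ k n t, L k n t =
      {k' | ∃ V : Set ℕ,
        Deriv (Ax0 K N Act) Step0 (Tuples C CR) (Tup.t4 k n (PExp.key k') V) ∧
        t ∈ V})
    {p : PExp K N} (hp : FQ p) (k k' : K) (t : ℕ) :
    k' ∈ interp L p k t ↔
      ∃ V : Set ℕ,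
        Deriv (Ax0 K N Act) Step0 (Tuples C CR) (Tup.t3 p (PExp.key k') V) ∧
        t ∈ V := by
  constructor
  · intro hk
    induction hp generalizing k' with
    | key =>
        simp only [interp, Set.mem_singleton_iff] at hk
        subst hk
        exact ⟨Set.univ, Deriv.ax ⟨_, FQ.key _, rfl⟩, trivial⟩
    | @ext p0 n hp0 ih =>
        simp only [interp, Set.mem_iUnion] at hk
        obtain ⟨k'', hk'', hkL⟩ := hk
        obtain ⟨V1, D1, ht1⟩ := ih k'' hk''
        rw [hL] at hkL
        obtain ⟨V2, D2, ht2⟩ := hkL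
        have D1' := deriv_t3_ext D1 _ _ _ rfl [n]
        refine ⟨V1 ∩ V2, ?_, ht1, ht2⟩
        exact Deriv.step D1' D2
          (Step0.r6 (k1 := k'') (k2 := k') (n := n) (q := []))
  · rintro ⟨V, D, ht⟩
    have := deriv_t3_sound hL D _ _ _ rfl t ht k
    exact this (by simp [interp])
end

section
/- Single-certificate base case of Lemma 3red: if ⟶₀* includes the axiom R5 and the only derivable 3-tuples with a bare key on the left are trivial, then for every key k': the set of 3-tuples ⟨k', q, V⟩ derivable from any set T of 4- and 5-tuples using rules R1, R2, R3, R5, R6 satisfies q = k' and V = [0,∞]. (That is, no nontrivial binding of a bare key can ever be derived.) -/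
/-! An R6 step keeps the subject of its 3-tuple but needs a compound name as its object, while the
only 3-tuples with a bare-key subject available from the start are the R5 axioms `⟨k, k, [0,∞]⟩`,
whose object is a bare key. Hence R6 never fires on a bare-key subject, and the axioms are all
there is. -/

theorem PExp.ext_comp_ne_key {K N : Type*} (a b : PExp K N) (l : List N) (k : K) :
    PExp.ext (PExp.comp a b) l ≠ PExp.key k := by
  induction l generalizing a b with
  | nil => nofun
  | cons n l ih => exact ih _ _

theorem Deriv.of_invariant {K N Act : Type*} {Ax : Set (Tup K N Act)}
    {St : Tup K N Act → Tup K N Act → Tup K N Act → Prop} {T : Set (Tup K N Act)}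
    (P : Tup K N Act → Prop) (hT : ∀ τ ∈ T, P τ) (hAx : ∀ τ ∈ Ax, P τ)
    (hSt : ∀ {τ₁ τ₂ τ₃}, P τ₁ → P τ₂ → St τ₁ τ₂ τ₃ → P τ₃) {τ : Tup K N Act}
    (h : Deriv Ax St T τ) : P τ := by
  induction h with
  | mem hτ => exact hT _ hτ
  | ax hτ => exact hAx _ hτ
  | step _ _ hst ih₁ ih₂ => exact hSt ih₁ ih₂ hst

section BareKey

variable {K N Act : Type*}

def Tup.BindsBareKeyTrivially (τ : Tup K N Act) : Prop :=
  ∀ (k : K) (q : PExp K N) (V : Set ℕ),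
    τ = Tup.t3 (PExp.key k) q V → q = PExp.key k ∧ V = Set.univ

theorem Tup.bindsBareKeyTrivially_of_mem_ax0 {τ : Tup K N Act} (hτ : τ ∈ Ax0 K N Act) :
    τ.BindsBareKeyTrivially := by
  rintro k q V rfl
  obtain ⟨p, -, hp⟩ := hτ
  cases hp
  exact ⟨rfl, rfl⟩

theorem Step0.bindsBareKeyTrivially {τ₁ τ₂ τ₃ : Tup K N Act} (h₁ : τ₁.BindsBareKeyTrivially)
    (hst : Step0 τ₁ τ₂ τ₃) : τ₃.BindsBareKeyTrivially := by
  rintro k q V rfl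
  cases hst with
  | r6 => exact absurd (h₁ k _ _ rfl).1 (PExp.ext_comp_ne_key _ _ _ _)

end BareKey

/-- No nontrivial binding of a bare key can be derived: any derivable 3-tuple
`⟨k', q, V⟩` with a bare key on the left satisfies `q = k'` and `V = [0,∞]`. -/
theorem bare_key_trivial {K N Act : Type*} (T : Set (Tup K N Act))
    (hT : ∀ (p q : PExp K N) (V : Set ℕ), Tup.t3 p q V ∉ T)
    {k' : K} {q : PExp K N} {V : Set ℕ}
    (h : Deriv (Ax0 K N Act) Step0 T (Tup.t3 (PExp.key k') q V)) :
    q = PExp.key k' ∧ V = Set.univ := by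
  have hT_binds : ∀ τ ∈ T, τ.BindsBareKeyTrivially := by
    rintro τ hτ k q V rfl
    exact absurd hτ (hT _ _ _)
  exact Deriv.of_invariant _ hT_binds (fun _ => Tup.bindsBareKeyTrivially_of_mem_ax0)
    (fun h₁ _ => Step0.bindsBareKeyTrivially h₁) h k' q V rfl
end
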